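/- Let d ≥ 1, let h : {−1,1}^d → ℝ satisfy 0 ≤ h(y) ≤ d for all y, let M ≥ 2d, and define f(x) = min(M, h(round(x)) + 2M·g(x)). Then: (a) f(y) = h(y) for every hypercube vertex y ∈ {−1,1}^d; (b) f(x) ≥ h(round(x)) for every x ∈ ℝ^d; (c) for any R ≥ √d, the minimum of f over the closed ball B_d(0,R) equals the minimum of h over {−1,1}^d; and (d) if x ∈ B_d(0,R) satisfies f(x) ≤ min f + ε for some ε ≥ 0, then h(round(x)) ≤ min h + ε, i.e., round(x) is an ε-minimizer of h. -/

import Mathlib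

open Real MeasureTheory

/-- The coordinatewise sign vector: `round(x)_i = 1` if `x_i ≥ 0` and `-1` otherwise. -/
noncomputable def rnd {d : ℕ} (x : EuclideanSpace ℝ (Fin d)) : EuclideanSpace ℝ (Fin d) :=
  WithLp.toLp 2 fun i => if 0 ≤ x i then 1 else -1

/-- The continuous extension `f(x) = min(M, h(round x) + 2M·‖x - round x‖)` of a
function `h` on the hypercube vertices. -/
noncomputable def fExt {d : ℕ} (h : EuclideanSpace ℝ (Fin d) → ℝ) (M : ℝ)
    (x : EuclideanSpace ℝ (Fin d)) : ℝ :=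
  min M (h (rnd x) + 2 * M * ‖x - rnd x‖)

/-!
Since `h ≤ d ≤ M`, the extension agrees with `h` on the vertices and never drops below
`h ∘ round`. Every vertex has norm `√d`, so the ball of radius `R ≥ √d` contains all vertices
while `round` maps it back into them, so both infima are the least value of `h` on a vertex.
An `ε`-minimizer `x` of the extension then gives `h (round x) ≤ f x ≤ min f + ε = min h + ε`.
-/

theorem csInf_image_eq_of_subset_of_dominated {α β : Type*} [ConditionallyCompleteLattice β]
    {f g : α → β} {A S : Set α} (hSA : S ⊆ A) (hS : S.Nonempty) (hg : BddBelow (g '' S))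
    (hfg : ∀ y ∈ S, f y = g y) (hdom : ∀ x ∈ A, ∃ y ∈ S, g y ≤ f x) :
    sInf (f '' A) = sInf (g '' S) := by
  have hlower : ∀ b ∈ f '' A, sInf (g '' S) ≤ b := by
    rintro _ ⟨x, hx, rfl⟩
    obtain ⟨y, hy, hyx⟩ := hdom x hx
    exact (csInf_le hg ⟨y, hy, rfl⟩).trans hyx
  apply le_antisymm
  · refine le_csInf (hS.image g) ?_
    rintro _ ⟨y, hy, rfl⟩
    rw [← hfg y hy]
    exact csInf_le ⟨_, hlower⟩ ⟨y, hSA hy, rfl⟩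
  · exact le_csInf ((hS.mono hSA).image f) hlower

section Hypercube

variable {d : ℕ}

def hypercube (d : ℕ) : Set (EuclideanSpace ℝ (Fin d)) :=
  {y | ∀ i, y i = 1 ∨ y i = -1}

theorem hypercube_nonempty : (hypercube d).Nonempty :=
  ⟨WithLp.toLp 2 fun _ => 1, fun _ => Or.inl rfl⟩

theorem rnd_mem_hypercube (x : EuclideanSpace ℝ (Fin d)) : rnd x ∈ hypercube d := by
  intro i
  by_cases hx : 0 ≤ x i <;> simp [rnd, hx]

theorem rnd_eq_self_of_mem_hypercube {y : EuclideanSpace ℝ (Fin d)} (hy : y ∈ hypercube d) :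
    rnd y = y := by
  ext i
  rcases hy i with hi | hi <;> norm_num [rnd, hi]

theorem norm_eq_sqrt_of_mem_hypercube {y : EuclideanSpace ℝ (Fin d)} (hy : y ∈ hypercube d) :
    ‖y‖ = √d := by
  have hsq : ∀ i, y i ^ 2 = 1 := fun i => by rcases hy i with hi | hi <;> simp [hi]
  simp [EuclideanSpace.norm_eq, hsq]

theorem hypercube_subset_closedBall {R : ℝ} (hR : √d ≤ R) :
    hypercube d ⊆ Metric.closedBall 0 R := fun y hy => by
  rwa [mem_closedBall_zero_iff, norm_eq_sqrt_of_mem_hypercube hy]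

theorem fExt_eq_of_mem_hypercube {h : EuclideanSpace ℝ (Fin d) → ℝ} {M : ℝ}
    {y : EuclideanSpace ℝ (Fin d)} (hy : y ∈ hypercube d) (hyM : h y ≤ M) :
    fExt h M y = h y := by
  rw [fExt, rnd_eq_self_of_mem_hypercube hy, sub_self, norm_zero, mul_zero, add_zero]
  exact min_eq_right hyM

theorem le_fExt {h : EuclideanSpace ℝ (Fin d) → ℝ} {M : ℝ} (hM : 0 ≤ M)
    {x : EuclideanSpace ℝ (Fin d)} (hxM : h (rnd x) ≤ M) : h (rnd x) ≤ fExt h M x :=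
  le_min hxM (le_add_of_nonneg_right (by positivity))

end Hypercube

theorem extension_optimization_equivalence_general (d : ℕ)
    (h : EuclideanSpace ℝ (Fin d) → ℝ)
    (hh : ∀ y : EuclideanSpace ℝ (Fin d), (∀ i, y i = 1 ∨ y i = -1) →
      0 ≤ h y ∧ h y ≤ (d : ℝ))
    (M : ℝ) (hM : 2 * (d : ℝ) ≤ M) :
    (∀ y : EuclideanSpace ℝ (Fin d), (∀ i, y i = 1 ∨ y i = -1) → fExt h M y = h y) ∧
    (∀ x : EuclideanSpace ℝ (Fin d), h (rnd x) ≤ fExt h M x) ∧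
    (∀ R : ℝ, Real.sqrt d ≤ R →
      sInf (fExt h M '' Metric.closedBall (0 : EuclideanSpace ℝ (Fin d)) R) =
        sInf (h '' {y : EuclideanSpace ℝ (Fin d) | ∀ i, y i = 1 ∨ y i = -1})) ∧
    (∀ R : ℝ, Real.sqrt d ≤ R → ∀ ε : ℝ, 0 ≤ ε →
      ∀ x ∈ Metric.closedBall (0 : EuclideanSpace ℝ (Fin d)) R,
        fExt h M x ≤
          sInf (fExt h M '' Metric.closedBall (0 : EuclideanSpace ℝ (Fin d)) R) + ε →
        h (rnd x) ≤
          sInf (h '' {y : EuclideanSpace ℝ (Fin d) | ∀ i, y i = 1 ∨ y i = -1}) + ε) := by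
  have hdM : (d : ℝ) ≤ M := by linarith [d.cast_nonneg (α := ℝ)]
  have hle_M : ∀ y ∈ hypercube d, h y ≤ M := fun y hy => (hh y hy).2.trans hdM
  have hvertex : ∀ y ∈ hypercube d, fExt h M y = h y := fun y hy =>
    fExt_eq_of_mem_hypercube hy (hle_M y hy)
  have hround : ∀ x, h (rnd x) ≤ fExt h M x := fun x =>
    le_fExt (by linarith) (hle_M _ (rnd_mem_hypercube x))
  have hinf : ∀ R : ℝ, √d ≤ R →
      sInf (fExt h M '' Metric.closedBall 0 R) = sInf (h '' hypercube d) := fun R hR =>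
    csInf_image_eq_of_subset_of_dominated (hypercube_subset_closedBall hR) hypercube_nonempty
      ⟨0, by rintro _ ⟨y, hy, rfl⟩; exact (hh y hy).1⟩ hvertex
      fun x _ => ⟨rnd x, rnd_mem_hypercube x, hround x⟩
  refine ⟨hvertex, hround, hinf, fun R hR ε _ x _ hx => ?_⟩
  calc h (rnd x) ≤ fExt h M x := hround x
    _ ≤ sInf (h '' hypercube d) + ε := by rwa [hinf R hR] at hx

/-- For `0 ≤ h ≤ d` on the hypercube and `M ≥ 2d`:
(a) `f = h` on hypercube vertices; (b) `f x ≥ h (round x)` everywhere;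
(c) for `R ≥ √d`, the minimum of `f` over `B(0,R)` equals the minimum of `h` over
the hypercube; (d) any `ε`-minimizer `x` of `f` over `B(0,R)` rounds to an
`ε`-minimizer of `h`. -/
theorem extension_optimization_equivalence (d : ℕ) (hd : 1 ≤ d)
    (h : EuclideanSpace ℝ (Fin d) → ℝ)
    (hh : ∀ y : EuclideanSpace ℝ (Fin d), (∀ i, y i = 1 ∨ y i = -1) →
      0 ≤ h y ∧ h y ≤ (d : ℝ))
    (M : ℝ) (hM : 2 * (d : ℝ) ≤ M) :
    (∀ y : EuclideanSpace ℝ (Fin d), (∀ i, y i = 1 ∨ y i = -1) → fExt h M y = h y) ∧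
    (∀ x : EuclideanSpace ℝ (Fin d), h (rnd x) ≤ fExt h M x) ∧
    (∀ R : ℝ, Real.sqrt d ≤ R →
      sInf (fExt h M '' Metric.closedBall (0 : EuclideanSpace ℝ (Fin d)) R) =
        sInf (h '' {y : EuclideanSpace ℝ (Fin d) | ∀ i, y i = 1 ∨ y i = -1})) ∧
    (∀ R : ℝ, Real.sqrt d ≤ R → ∀ ε : ℝ, 0 ≤ ε →
      ∀ x ∈ Metric.closedBall (0 : EuclideanSpace ℝ (Fin d)) R,
        fExt h M x ≤
          sInf (fExt h M '' Metric.closedBall (0 : EuclideanSpace ℝ (Fin d)) R) + ε →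
        h (rnd x) ≤
          sInf (h '' {y : EuclideanSpace ℝ (Fin d) | ∀ i, y i = 1 ∨ y i = -1}) + ε) :=
  extension_optimization_equivalence_general d h hh M hM
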